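/- Let T = ℝ² with basis e₁, e₂ and let [[·,·,·]] be the unique trilinear operation on T satisfying [[x,y,z]] = -[[y,x,z]] and [[e₁,e₂,e₁]] = e₁, [[e₁,e₂,e₂]] = -e₂. Then (T,[[·,·,·]]) is a Lie triple system, and for any α ∈ ℝ with α ≠ 0, the symmetric bilinear form b on T determined by b(e₁,e₁) = 0 = b(e₂,e₂) and b(e₁,e₂) = α is nondegenerate and right invariant (b([[x,y,z]],u) = b([[z,u,x]],y) for all x,y,z,u ∈ T); hence (T,b) is a quadratic Lie triple system. -/

import Mathlib

/-!
Skew-symmetry in the first two slots forces `[[x, y, z]] = (x ∧ y) • D z` with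
`x ∧ y = x₀ y₁ - x₁ y₀` and `D = diag(1, -1)`, and symmetry forces
`b x y = α (x₀ y₁ + x₁ y₀)`. Then (T1) is the identity `(x ∧ y) z + (y ∧ z) x + (z ∧ x) y = 0`,
(T2) holds because `D² = 1` and `D` is traceless (so `D x ∧ y + x ∧ D y = 0`), and right
invariance holds because `b (D z) u = α (z ∧ u)`, which makes both sides `α (x ∧ y) (z ∧ u)`.
-/

namespace FinTwo

variable {R M : Type*} [CommRing R] [AddCommGroup M] [Module R M]

theorem eq_smul_add_smul (x : Fin 2 → R) : x = x 0 • ![1, 0] + x 1 • ![0, 1] := by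
  ext i
  fin_cases i <;> simp

theorem linearMap_apply (f : (Fin 2 → R) →ₗ[R] M) (x : Fin 2 → R) :
    f x = x 0 • f ![1, 0] + x 1 • f ![0, 1] := by
  conv_lhs => rw [eq_smul_add_smul x]
  rw [map_add, map_smul, map_smul]

theorem bilinMap_apply (f : (Fin 2 → R) →ₗ[R] (Fin 2 → R) →ₗ[R] M) (x y : Fin 2 → R) :
    f x y = (x 0 * y 0) • f ![1, 0] ![1, 0] + (x 0 * y 1) • f ![1, 0] ![0, 1] +
      (x 1 * y 0) • f ![0, 1] ![1, 0] + (x 1 * y 1) • f ![0, 1] ![0, 1] := by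
  rw [linearMap_apply f x, LinearMap.add_apply, LinearMap.smul_apply, LinearMap.smul_apply,
    linearMap_apply (f ![1, 0]) y, linearMap_apply (f ![0, 1]) y]
  simp only [smul_add, smul_smul, add_assoc]

def wedge (x y : Fin 2 → R) : R := x 0 * y 1 - x 1 * y 0

theorem bilinMap_apply_of_skew [IsAddTorsionFree M]
    (f : (Fin 2 → R) →ₗ[R] (Fin 2 → R) →ₗ[R] M) (hf : ∀ x y, f x y = -f y x)
    (x y : Fin 2 → R) : f x y = wedge x y • f ![1, 0] ![0, 1] := by
  have hself : ∀ v, f v v = 0 := fun v => self_eq_neg.mp (hf v v)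
  rw [bilinMap_apply, hself, hself, hf ![0, 1], wedge, sub_smul, smul_neg]
  simp only [smul_zero, zero_add, add_zero, sub_eq_add_neg]

theorem bilinMap_apply_of_symm (f : (Fin 2 → R) →ₗ[R] (Fin 2 → R) →ₗ[R] M)
    (hf : ∀ x y, f x y = f y x) (x y : Fin 2 → R) :
    f x y = (x 0 * y 0) • f ![1, 0] ![1, 0] + (x 0 * y 1 + x 1 * y 0) • f ![1, 0] ![0, 1] +
      (x 1 * y 1) • f ![0, 1] ![0, 1] := by
  rw [bilinMap_apply, hf ![0, 1], add_smul]
  abel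

def diagTriple (x y z : Fin 2 → R) : Fin 2 → R := wedge x y • ![z 0, -z 1]

def hyperbolicForm (α : R) (x y : Fin 2 → R) : R := α * (x 0 * y 1 + x 1 * y 0)

theorem diagTriple_cyclic (x y z : Fin 2 → R) :
    diagTriple x y z + diagTriple y z x + diagTriple z x y = 0 := by
  ext i
  fin_cases i <;> simp [diagTriple, wedge] <;> ring

theorem diagTriple_derivation (u v x y z : Fin 2 → R) :
    diagTriple u v (diagTriple x y z) = diagTriple (diagTriple u v x) y z +
      diagTriple x (diagTriple u v y) z + diagTriple x y (diagTriple u v z) := by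
  ext i
  fin_cases i <;> simp [diagTriple, wedge] <;> ring

theorem hyperbolicForm_diagTriple (α : R) (x y z u : Fin 2 → R) :
    hyperbolicForm α (diagTriple x y z) u = α * wedge x y * wedge z u := by
  simp only [hyperbolicForm, diagTriple, wedge, Pi.smul_apply, Matrix.cons_val_zero,
    Matrix.cons_val_one, Matrix.cons_val_fin_one, smul_eq_mul]
  ring

theorem hyperbolicForm_invariant (α : R) (x y z u : Fin 2 → R) :
    hyperbolicForm α (diagTriple x y z) u = hyperbolicForm α (diagTriple z u x) y := by
  rw [hyperbolicForm_diagTriple, hyperbolicForm_diagTriple, mul_right_comm]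

theorem hyperbolicForm_nondegenerate [NoZeroDivisors R] {α : R} (hα : α ≠ 0) (x : Fin 2 → R)
    (hx : ∀ y, hyperbolicForm α x y = 0) : x = 0 := by
  have h0 := hx ![0, 1]
  have h1 := hx ![1, 0]
  simp only [hyperbolicForm, Matrix.cons_val_one, Matrix.cons_val_fin_one, Matrix.cons_val_zero,
    mul_one, mul_zero, add_zero, zero_add, mul_eq_zero, hα, false_or] at h0 h1
  ext i
  fin_cases i
  exacts [h0, h1]

end FinTwo

open FinTwo

theorem example_two_dim_quadratic_lts
    (tri : (Fin 2 → ℝ) →ₗ[ℝ] (Fin 2 → ℝ) →ₗ[ℝ] (Fin 2 → ℝ) →ₗ[ℝ] (Fin 2 → ℝ))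
    (hskew : ∀ x y z : Fin 2 → ℝ, tri x y z = - tri y x z)
    (h1 : tri ![1, 0] ![0, 1] ![1, 0] = ![1, 0])
    (h2 : tri ![1, 0] ![0, 1] ![0, 1] = -![0, 1])
    (α : ℝ) (hα : α ≠ 0)
    (b : LinearMap.BilinForm ℝ (Fin 2 → ℝ))
    (hbsymm : ∀ x y : Fin 2 → ℝ, b x y = b y x)
    (hb11 : b ![1, 0] ![1, 0] = 0) (hb22 : b ![0, 1] ![0, 1] = 0)
    (hb12 : b ![1, 0] ![0, 1] = α) :
    (∀ x y z : Fin 2 → ℝ, tri x y z + tri y z x + tri z x y = 0) ∧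
    (∀ u v x y z : Fin 2 → ℝ, tri u v (tri x y z) =
      tri (tri u v x) y z + tri x (tri u v y) z + tri x y (tri u v z)) ∧
    (∀ x : Fin 2 → ℝ, (∀ y : Fin 2 → ℝ, b x y = 0) → x = 0) ∧
    (∀ x y z u : Fin 2 → ℝ, b (tri x y z) u = b (tri z u x) y) := by
  have htri : ∀ x y z, tri x y z = diagTriple x y z := by
    intro x y z
    have hxy := bilinMap_apply_of_skew (tri.compr₂ (LinearMap.applyₗ z))
      (fun x y => hskew x y z) x y
    simp only [LinearMap.compr₂_apply, LinearMap.applyₗ_apply_apply] at hxy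
    rw [hxy, linearMap_apply, h1, h2, diagTriple]
    ext i
    fin_cases i <;> simp
  have hb : ∀ x y, b x y = hyperbolicForm α x y := by
    intro x y
    rw [bilinMap_apply_of_symm b hbsymm, hb11, hb22, hb12, hyperbolicForm]
    simp only [smul_eq_mul]
    ring
  simp only [htri, hb]
  exact ⟨diagTriple_cyclic, diagTriple_derivation, hyperbolicForm_nondegenerate hα,
    hyperbolicForm_invariant α⟩
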